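/- Let 0 < λ1 < λ2. For each integer k ≥ 1, let X_k and Y_k be independent real random variables, where X_k has the Gamma distribution with shape k and rate λ1 and Y_k has the Gamma distribution with shape k and rate λ2. Then lim_{k→∞} Var[|X_k − Y_k|]/k = 1/λ1² + 1/λ2², where Var[|X_k − Y_k|] = E[|X_k − Y_k|²] − (E[|X_k − Y_k|])². -/

import Mathlib

/-!
Write `Z = X_k - Y_k`. Its mean is `m = k (1/λ₁ - 1/λ₂) > 0` and, by independence, its variance is
`k (1/λ₁² + 1/λ₂²)`. As `|Z|² = Z²`, `Var |Z| = Var Z - d (d + 2m)` with `d = E|Z| - E Z ≥ 0`.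
The pointwise bound `|z| - z ≤ 2 (z - m)⁴ / m³` and the fourth central moments `(3k² + 6k) / λ⁴` of
the Gamma laws give `d = O(1/k)`, hence `Var |Z| / k = 1/λ₁² + 1/λ₂² - d (d/k + 2 (1/λ₁ - 1/λ₂))`
tends to `1/λ₁² + 1/λ₂²`.
-/

open MeasureTheory ProbabilityTheory Filter Real Set Finset

lemma Real.Gamma_add_nat_eq_prod_mul {a : ℝ} (ha : 0 < a) (n : ℕ) :
    Gamma (a + n) = (∏ i ∈ range n, (a + i)) * Gamma a := by
  induction n with
  | zero => simp
  | succ n ih =>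
    rw [Nat.cast_succ, ← add_assoc, Gamma_add_one (by positivity), ih, prod_range_succ]
    ring

lemma abs_sub_self_le_two_mul_sub_pow_four_div {m : ℝ} (hm : 0 < m) (z : ℝ) :
    |z| - z ≤ 2 * (z - m) ^ 4 / m ^ 3 := by
  rcases le_or_gt 0 z with hz | hz
  · rw [abs_of_nonneg hz, sub_self]
    positivity
  · rw [abs_of_neg hz, le_div_iff₀ (by positivity)]
    have : m ^ 3 ≤ (m - z) ^ 3 := by gcongr; linarith
    nlinarith [pow_pos hm 3]

lemma sub_pow_four_le_eight_mul (u v : ℝ) : (u - v) ^ 4 ≤ 8 * (u ^ 4 + v ^ 4) := by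
  nlinarith [sq_nonneg (u + v), sq_nonneg (u - v), sq_nonneg (u ^ 2 - v ^ 2)]

namespace MeasureTheory

lemma integrable_sub_pow_of_forall_integrable_pow {μ : Measure ℝ}
    (h : ∀ m : ℕ, Integrable (fun x ↦ x ^ m) μ) (c : ℝ) (n : ℕ) :
    Integrable (fun x ↦ (x - c) ^ n) μ := by
  simp_rw [sub_eq_add_neg, add_pow]
  exact integrable_finsetSum _ fun m _ ↦ ((h m).mul_const _).mul_const _

lemma integral_sub_pow_of_forall_integrable_pow {μ : Measure ℝ}
    (h : ∀ m : ℕ, Integrable (fun x ↦ x ^ m) μ) (c : ℝ) (n : ℕ) :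
    ∫ x, (x - c) ^ n ∂μ = ∑ m ∈ range (n + 1), (∫ x, x ^ m ∂μ) * (-c) ^ (n - m) * n.choose m := by
  simp_rw [sub_eq_add_neg, add_pow]
  rw [integral_finsetSum _ fun m _ ↦ ((h m).mul_const _).mul_const _]
  simp_rw [integral_mul_const]

variable {Ω : Type*} [MeasurableSpace Ω] {μ : Measure Ω}

lemma integral_abs_sub_integral_le {Z : Ω → ℝ} (hZ : Integrable Z μ) {m : ℝ} (hm : 0 < m)
    (hZm : Integrable (fun ω ↦ (Z ω - m) ^ 4) μ) :
    ∫ ω, |Z ω| ∂μ - ∫ ω, Z ω ∂μ ≤ 2 * (∫ ω, (Z ω - m) ^ 4 ∂μ) / m ^ 3 := by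
  rw [← integral_sub hZ.abs hZ, mul_div_right_comm, ← integral_const_mul]
  refine integral_mono (hZ.abs.sub hZ) (hZm.const_mul _) fun ω ↦ ?_
  simpa only [mul_div_right_comm] using abs_sub_self_le_two_mul_sub_pow_four_div hm (Z ω)

end MeasureTheory

namespace ProbabilityTheory

variable {a b r s : ℝ}

lemma gammaMeasure_eq_withDensity_ofReal :
    gammaMeasure a r = volume.withDensity fun x ↦ ENNReal.ofReal (gammaPDFReal a r x) := rfl

lemma support_gammaPDFReal_subset : Function.support (gammaPDFReal a r) ⊆ Ici 0 :=
  fun _ hx ↦ by_contra fun h ↦ hx (if_neg h)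

lemma integrable_gammaMeasure_iff (ha : 0 < a) (hr : 0 < r) {f : ℝ → ℝ} :
    Integrable f (gammaMeasure a r) ↔ IntegrableOn (fun x ↦ gammaPDFReal a r x * f x) (Ioi 0) := by
  rw [gammaMeasure_eq_withDensity_ofReal, integrable_withDensity_iff_integrable_smul'
    (measurable_gammaPDFReal a r).ennreal_ofReal (ae_of_all _ fun _ ↦ ENNReal.ofReal_lt_top),
    ← integrableOn_Ici_iff_integrableOn_Ioi, integrableOn_iff_integrable_of_support_subset]
  · simp only [ENNReal.toReal_ofReal (gammaPDFReal_nonneg ha hr _), smul_eq_mul]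
  · exact (Function.support_mul_subset_left _ _).trans support_gammaPDFReal_subset

lemma integral_gammaMeasure (ha : 0 < a) (hr : 0 < r) (f : ℝ → ℝ) :
    ∫ x, f x ∂gammaMeasure a r = ∫ x in Ioi 0, gammaPDFReal a r x * f x := by
  rw [gammaMeasure_eq_withDensity_ofReal, integral_withDensity_eq_integral_toReal_smul
    (measurable_gammaPDFReal a r).ennreal_ofReal (ae_of_all _ fun _ ↦ ENNReal.ofReal_lt_top),
    ← integral_Ici_eq_integral_Ioi, setIntegral_eq_integral_of_forall_compl_eq_zero]
  · simp only [ENNReal.toReal_ofReal (gammaPDFReal_nonneg ha hr _), smul_eq_mul]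
  · intro x hx
    rw [Function.notMem_support.mp fun h ↦ hx (support_gammaPDFReal_subset h), zero_mul]

lemma gammaPDFReal_mul_pow_of_pos {x : ℝ} (hx : 0 < x) (n : ℕ) :
    gammaPDFReal a r x * x ^ n = r ^ a / Gamma a * (x ^ (a + n - 1) * exp (-(r * x))) := by
  rw [gammaPDFReal, if_pos hx.le, ← rpow_natCast, add_sub_right_comm, rpow_add hx]
  ring

lemma integrable_pow_gammaMeasure (ha : 0 < a) (hr : 0 < r) (n : ℕ) :
    Integrable (fun x ↦ x ^ n) (gammaMeasure a r) := by
  refine (integrable_gammaMeasure_iff ha hr).2 <| IntegrableOn.congr_fun ?_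
    (fun x hx ↦ (gammaPDFReal_mul_pow_of_pos hx n).symm) measurableSet_Ioi
  refine Integrable.const_mul ?_ _
  simpa [IntegrableOn] using integrableOn_rpow_mul_exp_neg_mul_rpow (p := 1) (s := a + n - 1)
    (by linarith) zero_lt_one hr

lemma integral_pow_gammaMeasure (ha : 0 < a) (hr : 0 < r) (n : ℕ) :
    ∫ x, x ^ n ∂gammaMeasure a r = (∏ i ∈ range n, (a + i)) / r ^ n := by
  rw [integral_gammaMeasure ha hr, setIntegral_congr_fun measurableSet_Ioi
    (fun x hx ↦ gammaPDFReal_mul_pow_of_pos hx n), integral_const_mul,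
    integral_rpow_mul_exp_neg_mul_Ioi (by positivity) hr, Real.Gamma_add_nat_eq_prod_mul ha,
    div_rpow zero_le_one hr.le, one_rpow, rpow_add hr, rpow_natCast]
  have := Gamma_pos_of_pos ha
  field_simp

lemma integral_id_gammaMeasure (ha : 0 < a) (hr : 0 < r) :
    ∫ x, x ∂gammaMeasure a r = a / r := by
  simpa using integral_pow_gammaMeasure ha hr 1

lemma memLp_id_two_gammaMeasure (ha : 0 < a) (hr : 0 < r) : MemLp id 2 (gammaMeasure a r) :=
  (memLp_two_iff_integrable_sq aestronglyMeasurable_id).2 (integrable_pow_gammaMeasure ha hr 2)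

lemma variance_id_gammaMeasure (ha : 0 < a) (hr : 0 < r) :
    Var[id; gammaMeasure a r] = a / r ^ 2 := by
  have := isProbabilityMeasure_gammaMeasure ha hr
  rw [variance_eq_sub (memLp_id_two_gammaMeasure ha hr)]
  simp only [Pi.pow_apply, id_eq, integral_id_gammaMeasure ha hr,
    integral_pow_gammaMeasure ha hr 2, prod_range_succ]
  field_simp
  ring

lemma integral_sub_pow_four_gammaMeasure (ha : 0 < a) (hr : 0 < r) :
    ∫ x, (x - a / r) ^ 4 ∂gammaMeasure a r = (3 * a ^ 2 + 6 * a) / r ^ 4 := by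
  rw [integral_sub_pow_of_forall_integrable_pow (integrable_pow_gammaMeasure ha hr)]
  simp only [integral_pow_gammaMeasure ha hr, sum_range_succ, prod_range_succ]
  norm_num [Nat.choose]
  field_simp
  ring

variable {Ω : Type*} [MeasurableSpace Ω] {μ : Measure Ω}

lemma integral_abs_sq_sub_sq_integral_abs [IsProbabilityMeasure μ] {Z : Ω → ℝ} (hZ : MemLp Z 2 μ) :
    ∫ ω, |Z ω| ^ 2 ∂μ - (∫ ω, |Z ω| ∂μ) ^ 2
      = Var[Z; μ] - (∫ ω, |Z ω| ∂μ - ∫ ω, Z ω ∂μ) * (∫ ω, |Z ω| ∂μ + ∫ ω, Z ω ∂μ) := by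
  rw [variance_eq_sub hZ]
  simp only [sq_abs, Pi.pow_apply]
  ring

lemma HasLaw.integrable_comp {𝓧 : Type*} [MeasurableSpace 𝓧] {ν : Measure 𝓧} {X : Ω → 𝓧}
    (hX : HasLaw X ν μ) {f : 𝓧 → ℝ} (hf : Integrable f ν) : Integrable (fun ω ↦ f (X ω)) μ :=
  (hX.map_eq ▸ hf).comp_aemeasurable hX.aemeasurable

variable {X Y : Ω → ℝ}

lemma integrable_of_hasLaw_gammaMeasure (ha : 0 < a) (hr : 0 < r)
    (hX : HasLaw X (gammaMeasure a r) μ) : Integrable X μ :=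
  hX.integrable_comp (f := fun x ↦ x) (by simpa using integrable_pow_gammaMeasure ha hr 1)

lemma integral_sub_of_hasLaw_gammaMeasure (ha : 0 < a) (hr : 0 < r) (hb : 0 < b) (hs : 0 < s)
    (hX : HasLaw X (gammaMeasure a r) μ) (hY : HasLaw Y (gammaMeasure b s) μ) :
    ∫ ω, (X ω - Y ω) ∂μ = a / r - b / s := by
  rw [integral_sub (integrable_of_hasLaw_gammaMeasure ha hr hX)
    (integrable_of_hasLaw_gammaMeasure hb hs hY), hX.integral_eq, hY.integral_eq,
    integral_id_gammaMeasure ha hr, integral_id_gammaMeasure hb hs]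

lemma memLp_two_of_hasLaw_gammaMeasure (ha : 0 < a) (hr : 0 < r)
    (hX : HasLaw X (gammaMeasure a r) μ) : MemLp X 2 μ :=
  (hX.map_eq ▸ memLp_id_two_gammaMeasure ha hr).comp_of_map hX.aemeasurable

lemma variance_sub_of_hasLaw_gammaMeasure (ha : 0 < a) (hr : 0 < r) (hb : 0 < b) (hs : 0 < s)
    (hX : HasLaw X (gammaMeasure a r) μ) (hY : HasLaw Y (gammaMeasure b s) μ)
    (hXY : IndepFun X Y μ) :
    Var[fun ω ↦ X ω - Y ω; μ] = a / r ^ 2 + b / s ^ 2 := by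
  have := hX.isProbabilityMeasure_iff.2 (isProbabilityMeasure_gammaMeasure ha hr)
  have hX2 := memLp_two_of_hasLaw_gammaMeasure ha hr hX
  have hY2 := memLp_two_of_hasLaw_gammaMeasure hb hs hY
  rw [variance_fun_sub hX2 hY2, hXY.covariance_eq_zero hX2 hY2, hX.variance_eq, hY.variance_eq,
    variance_id_gammaMeasure ha hr, variance_id_gammaMeasure hb hs]
  ring

lemma integral_abs_sq_sub_sq_integral_abs_of_hasLaw_gammaMeasure (ha : 0 < a) (hr : 0 < r)
    (hb : 0 < b) (hs : 0 < s) (hX : HasLaw X (gammaMeasure a r) μ)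
    (hY : HasLaw Y (gammaMeasure b s) μ) (hXY : IndepFun X Y μ) :
    ∫ ω, |X ω - Y ω| ^ 2 ∂μ - (∫ ω, |X ω - Y ω| ∂μ) ^ 2
      = a / r ^ 2 + b / s ^ 2 - (∫ ω, |X ω - Y ω| ∂μ - ∫ ω, (X ω - Y ω) ∂μ)
          * (∫ ω, |X ω - Y ω| ∂μ - ∫ ω, (X ω - Y ω) ∂μ + 2 * (a / r - b / s)) := by
  have := hX.isProbabilityMeasure_iff.2 (isProbabilityMeasure_gammaMeasure ha hr)
  rw [integral_abs_sq_sub_sq_integral_abs (Z := fun ω ↦ X ω - Y ω)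
    ((memLp_two_of_hasLaw_gammaMeasure ha hr hX).sub (memLp_two_of_hasLaw_gammaMeasure hb hs hY)),
    variance_sub_of_hasLaw_gammaMeasure ha hr hb hs hX hY hXY,
    integral_sub_of_hasLaw_gammaMeasure ha hr hb hs hX hY]
  ring

lemma integral_sub_pow_four_of_hasLaw_gammaMeasure (ha : 0 < a) (hr : 0 < r)
    (hX : HasLaw X (gammaMeasure a r) μ) :
    Integrable (fun ω ↦ (X ω - a / r) ^ 4) μ ∧
      ∫ ω, (X ω - a / r) ^ 4 ∂μ = (3 * a ^ 2 + 6 * a) / r ^ 4 :=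
  ⟨hX.integrable_comp (integrable_sub_pow_of_forall_integrable_pow
    (integrable_pow_gammaMeasure ha hr) (a / r) 4),
    (hX.integral_comp (f := fun x ↦ (x - a / r) ^ 4) (by fun_prop)).trans
      (integral_sub_pow_four_gammaMeasure ha hr)⟩

lemma integral_abs_sub_sub_integral_sub_le (ha : 0 < a) (hr : 0 < r) (hb : 0 < b) (hs : 0 < s)
    (hX : HasLaw X (gammaMeasure a r) μ) (hY : HasLaw Y (gammaMeasure b s) μ)
    (hbsar : b / s < a / r) :
    ∫ ω, |X ω - Y ω| ∂μ - ∫ ω, (X ω - Y ω) ∂μ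
      ≤ 16 * ((3 * a ^ 2 + 6 * a) / r ^ 4 + (3 * b ^ 2 + 6 * b) / s ^ 4) / (a / r - b / s) ^ 3 := by
  obtain ⟨hX4, hX4_eq⟩ := integral_sub_pow_four_of_hasLaw_gammaMeasure ha hr hX
  obtain ⟨hY4, hY4_eq⟩ := integral_sub_pow_four_of_hasLaw_gammaMeasure hb hs hY
  have hpt : ∀ ω, (X ω - Y ω - (a / r - b / s)) ^ 4
      ≤ 8 * ((X ω - a / r) ^ 4 + (Y ω - b / s) ^ 4) := fun ω ↦ by
    rw [show X ω - Y ω - (a / r - b / s) = (X ω - a / r) - (Y ω - b / s) by ring]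
    exact sub_pow_four_le_eight_mul _ _
  have hZ4 : Integrable (fun ω ↦ (X ω - Y ω - (a / r - b / s)) ^ 4) μ :=
    ((hX4.add hY4).const_mul 8).mono'
      (((hX.aemeasurable.sub hY.aemeasurable).sub_const _).pow_const 4).aestronglyMeasurable
      (ae_of_all _ fun ω ↦ by rw [Real.norm_eq_abs, abs_of_nonneg (by positivity)]; exact hpt ω)
  have h4 : ∫ ω, (X ω - Y ω - (a / r - b / s)) ^ 4 ∂μ
      ≤ 8 * ((3 * a ^ 2 + 6 * a) / r ^ 4 + (3 * b ^ 2 + 6 * b) / s ^ 4) := by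
    calc _ ≤ ∫ ω, 8 * ((X ω - a / r) ^ 4 + (Y ω - b / s) ^ 4) ∂μ :=
          integral_mono hZ4 ((hX4.add hY4).const_mul 8) hpt
      _ = _ := by rw [integral_const_mul, integral_add hX4 hY4, hX4_eq, hY4_eq]
  calc _ ≤ 2 * (∫ ω, (X ω - Y ω - (a / r - b / s)) ^ 4 ∂μ) / (a / r - b / s) ^ 3 :=
        integral_abs_sub_integral_le ((integrable_of_hasLaw_gammaMeasure ha hr hX).sub
          (integrable_of_hasLaw_gammaMeasure hb hs hY)) (sub_pos.2 hbsar) hZ4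
    _ ≤ 2 * (8 * ((3 * a ^ 2 + 6 * a) / r ^ 4 + (3 * b ^ 2 + 6 * b) / s ^ 4))
          / (a / r - b / s) ^ 3 := by
        have := sub_pos.2 hbsar
        gcongr
    _ = _ := by ring

lemma integral_abs_sub_sub_integral_sub_le_div (ha : 1 ≤ a) (hr : 0 < r) (hrs : r < s)
    (hX : HasLaw X (gammaMeasure a r) μ) (hY : HasLaw Y (gammaMeasure a s) μ) :
    ∫ ω, |X ω - Y ω| ∂μ - ∫ ω, (X ω - Y ω) ∂μ
      ≤ 144 * (1 / r ^ 4 + 1 / s ^ 4) / (1 / r - 1 / s) ^ 3 / a := by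
  have ha₀ : 0 < a := zero_lt_one.trans_le ha
  have hc : 0 < 1 / r - 1 / s := sub_pos.2 (one_div_lt_one_div_of_lt hr hrs)
  have hmean : a / r - a / s = a * (1 / r - 1 / s) := by ring
  calc _ ≤ 16 * ((3 * a ^ 2 + 6 * a) / r ^ 4 + (3 * a ^ 2 + 6 * a) / s ^ 4) / (a / r - a / s) ^ 3 :=
        integral_abs_sub_sub_integral_sub_le ha₀ hr ha₀ (hr.trans hrs) hX hY
          (by rw [← sub_pos, hmean]; positivity)
    _ = 16 * (3 + 6 / a) * (1 / r ^ 4 + 1 / s ^ 4) / (1 / r - 1 / s) ^ 3 / a := by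
        rw [hmean]
        field_simp
    _ ≤ _ := by
        have : 6 / a ≤ 6 := div_le_self (by norm_num) ha
        gcongr
        linarith

end ProbabilityTheory

theorem tendsto_variance_abs_diff_div_k_general
    {Ω : Type*} [MeasurableSpace Ω] (μ : Measure Ω)
    (lam1 lam2 : ℝ) (hlam1 : 0 < lam1) (hlam12 : lam1 < lam2)
    (X Y : ℕ → Ω → ℝ)
    (hX : ∀ k, 1 ≤ k → Measurable (X k)) (hY : ∀ k, 1 ≤ k → Measurable (Y k))
    (hindep : ∀ k, 1 ≤ k → IndepFun (X k) (Y k) μ)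
    (hXlaw : ∀ k, 1 ≤ k → μ.map (X k) = gammaMeasure k lam1)
    (hYlaw : ∀ k, 1 ≤ k → μ.map (Y k) = gammaMeasure k lam2) :
    Tendsto (fun k : ℕ =>
        ((∫ ω, |X k ω - Y k ω| ^ 2 ∂μ) - (∫ ω, |X k ω - Y k ω| ∂μ) ^ 2) / k)
      atTop (nhds (1 / lam1 ^ 2 + 1 / lam2 ^ 2)) := by
  have hlam2 : 0 < lam2 := hlam1.trans hlam12
  set c := 1 / lam1 - 1 / lam2
  set d : ℕ → ℝ := fun k ↦ ∫ ω, |X k ω - Y k ω| ∂μ - ∫ ω, (X k ω - Y k ω) ∂μ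
  have hXk (k : ℕ) (hk : 1 ≤ k) : HasLaw (X k) (gammaMeasure k lam1) μ :=
    ⟨(hX k hk).aemeasurable, hXlaw k hk⟩
  have hYk (k : ℕ) (hk : 1 ≤ k) : HasLaw (Y k) (gammaMeasure k lam2) μ :=
    ⟨(hY k hk).aemeasurable, hYlaw k hk⟩
  have hd : Tendsto d atTop (nhds 0) := by
    refine squeeze_zero' (Eventually.of_forall fun k ↦ sub_nonneg.2 <|
      (le_abs_self _).trans abs_integral_le_integral_abs) ?_
      (tendsto_const_div_atTop_nhds_zero_nat (144 * (1 / lam1 ^ 4 + 1 / lam2 ^ 4) / c ^ 3))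
    filter_upwards [eventually_ge_atTop 1] with k hk
    exact integral_abs_sub_sub_integral_sub_le_div (by exact_mod_cast hk) hlam1 hlam12
      (hXk k hk) (hYk k hk)
  have heq : ∀ᶠ k : ℕ in atTop,
      ((∫ ω, |X k ω - Y k ω| ^ 2 ∂μ) - (∫ ω, |X k ω - Y k ω| ∂μ) ^ 2) / k
        = 1 / lam1 ^ 2 + 1 / lam2 ^ 2 - d k * (d k / k + 2 * c) := by
    filter_upwards [eventually_ge_atTop 1] with k hk
    have hk₀ : (0 : ℝ) < k := by exact_mod_cast hk
    rw [integral_abs_sq_sub_sq_integral_abs_of_hasLaw_gammaMeasure hk₀ hlam1 hk₀ hlam2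
      (hXk k hk) (hYk k hk) (hindep k hk)]
    simp only [d, c]
    field_simp
  rw [tendsto_congr' heq]
  simpa using tendsto_const_nhds.sub
    (hd.mul ((hd.div_atTop tendsto_natCast_atTop_atTop).add tendsto_const_nhds))

theorem tendsto_variance_abs_diff_div_k
    {Ω : Type*} [MeasurableSpace Ω] (μ : Measure Ω) [IsProbabilityMeasure μ]
    (lam1 lam2 : ℝ) (hlam1 : 0 < lam1) (hlam12 : lam1 < lam2)
    (X Y : ℕ → Ω → ℝ)
    (hX : ∀ k, 1 ≤ k → Measurable (X k)) (hY : ∀ k, 1 ≤ k → Measurable (Y k))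
    (hindep : ∀ k, 1 ≤ k → IndepFun (X k) (Y k) μ)
    (hXlaw : ∀ k, 1 ≤ k → μ.map (X k) = gammaMeasure k lam1)
    (hYlaw : ∀ k, 1 ≤ k → μ.map (Y k) = gammaMeasure k lam2) :
    Tendsto (fun k : ℕ =>
        ((∫ ω, |X k ω - Y k ω| ^ 2 ∂μ) - (∫ ω, |X k ω - Y k ω| ∂μ) ^ 2) / k)
      atTop (nhds (1 / lam1 ^ 2 + 1 / lam2 ^ 2)) :=
  tendsto_variance_abs_diff_div_k_general μ lam1 lam2 hlam1 hlam12 X Y hX hY hindep hXlaw hYlaw
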